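/- arXiv:2507.23533 — 2 statements merged into one kernel-verified Lean document; each statement's English description precedes it below -/
import Mathlib

section
/- Deterministic queue stabilization: let n, c, d be positive integers with log₂(nd) ≤ n and (c+1)·d ≤ 4·(cd)²·log n (log the natural logarithm), and let t ≥ 2n. Suppose (q_s)_{s=t−n}^{t} is a sequence of nonnegative reals such that q_{t−n} ≤ nd, q_{s+1} ≤ q_s + (c+1)·d for every s ∈ {t−n,…,t−1}, and for every s ∈ {t−n,…,t−1} either q_s ≤ 3·32·(cd)²·log n or q_{s+1} ≤ q_s/2. Then q_t ≤ 100·(cd)²·log n. -/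
/-!
Below the threshold `B` a step raises the queue by at most `a`, so it lands below `M ≥ B + a`;
above `B` the queue halves. Hence `q k ≤ max (q₀ / 2 ^ k) M` along the window, and after `n`
steps the start value `q₀ ≤ n d` has shrunk below `d` because `n < 2 ^ n`; finally
`d ≤ (c + 1) d ≤ 4 (c d)² log n`, so `q₀ / 2 ^ n` is below `M = 100 (c d)² log n` as well.
-/

theorem le_max_div_two_pow_of_halving_above {q : ℕ → ℝ} {B a M : ℝ} {N : ℕ}
    (hBM : B + a ≤ M) (hM : 0 ≤ M)
    (hstep : ∀ k < N, q (k + 1) ≤ q k + a)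
    (hhalf : ∀ k < N, q k ≤ B ∨ q (k + 1) ≤ q k / 2) :
    ∀ k ≤ N, q k ≤ max (q 0 / 2 ^ k) M := by
  intro k
  induction k with
  | zero => simp
  | succ k ih =>
    intro hk
    have hkN : k < N := hk
    rcases hhalf k hkN with hsmall | hhalved
    · exact le_max_of_le_right (by linarith [hstep k hkN])
    · calc q (k + 1) ≤ max (q 0 / 2 ^ k) M / 2 := by linarith [ih hkN.le]
        _ = max (q 0 / 2 ^ (k + 1)) (M / 2) := by
          rw [← max_div_div_right zero_le_two, pow_succ, div_div]
        _ ≤ max (q 0 / 2 ^ (k + 1)) M := max_le_max le_rfl (by linarith)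

theorem div_two_pow_le_of_le_mul {x d : ℝ} {n : ℕ} (hd : 0 ≤ d) (hx : x ≤ n * d) :
    x / 2 ^ n ≤ d := by
  have hn : (n : ℝ) ≤ 2 ^ n := by exact_mod_cast n.lt_two_pow_self.le
  rw [div_le_iff₀ (by positivity)]
  nlinarith

theorem deterministic_queue_stabilization_general
    (n c d : ℕ)
    (hcd : ((c : ℝ) + 1) * d ≤ 4 * ((c : ℝ) * d) ^ 2 * Real.log n)
    (t : ℕ) (ht : 2 * n ≤ t)
    (q : ℕ → ℝ)
    (hstart : q (t - n) ≤ (n : ℝ) * d)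
    (hstep : ∀ s : ℕ, t - n ≤ s → s < t → q (s + 1) ≤ q s + ((c : ℝ) + 1) * d)
    (hhalf : ∀ s : ℕ, t - n ≤ s → s < t →
      q s ≤ 3 * 32 * ((c : ℝ) * d) ^ 2 * Real.log n ∨ q (s + 1) ≤ q s / 2) :
    q t ≤ 100 * ((c : ℝ) * d) ^ 2 * Real.log n := by
  have hX : 0 ≤ ((c : ℝ) * d) ^ 2 * Real.log n :=
    mul_nonneg (sq_nonneg _) (Real.log_natCast_nonneg n)
  have hd : (d : ℝ) ≤ ((c : ℝ) + 1) * d := le_mul_of_one_le_left d.cast_nonneg (by simp)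
  have hwindow := le_max_div_two_pow_of_halving_above (q := fun k ↦ q (t - n + k)) (N := n)
    (B := 3 * 32 * ((c : ℝ) * d) ^ 2 * Real.log n) (a := ((c : ℝ) + 1) * d)
    (M := 100 * ((c : ℝ) * d) ^ 2 * Real.log n) (by linarith) (by linarith)
    (fun k hk ↦ hstep (t - n + k) (by omega) (by omega))
    (fun k hk ↦ hhalf (t - n + k) (by omega) (by omega)) n le_rfl
  have hdecay : q (t - n) / 2 ^ n ≤ d := div_two_pow_le_of_le_mul d.cast_nonneg hstart
  rw [show t - n + n = t by omega] at hwindow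
  exact hwindow.trans (max_le (by simpa using hdecay.trans (by linarith)) le_rfl)

/-- Deterministic queue stabilization: let `n, c, d` be positive
integers with `log₂(nd) ≤ n` and `(c+1)·d ≤ 4·(cd)²·log n` (`log` the natural
logarithm), and let `t ≥ 2n`.  Suppose `(q_s)_{s=t−n}^{t}` is a sequence of
nonnegative reals such that `q_{t−n} ≤ nd`, `q_{s+1} ≤ q_s + (c+1)·d` for every
`s ∈ {t−n,…,t−1}`, and for every `s ∈ {t−n,…,t−1}` either
`q_s ≤ 3·32·(cd)²·log n` or `q_{s+1} ≤ q_s/2`.  Then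
`q_t ≤ 100·(cd)²·log n`. -/
theorem deterministic_queue_stabilization
    (n c d : ℕ) (hn : 0 < n) (hc : 0 < c) (hd : 0 < d)
    (hlog2 : Real.logb 2 ((n : ℝ) * d) ≤ (n : ℝ))
    (hcd : ((c : ℝ) + 1) * d ≤ 4 * ((c : ℝ) * d) ^ 2 * Real.log n)
    (t : ℕ) (ht : 2 * n ≤ t)
    (q : ℕ → ℝ)
    (hpos : ∀ s : ℕ, t - n ≤ s → s ≤ t → 0 ≤ q s)
    (hstart : q (t - n) ≤ (n : ℝ) * d)
    (hstep : ∀ s : ℕ, t - n ≤ s → s < t → q (s + 1) ≤ q s + ((c : ℝ) + 1) * d)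
    (hhalf : ∀ s : ℕ, t - n ≤ s → s < t →
      q s ≤ 3 * 32 * ((c : ℝ) * d) ^ 2 * Real.log n ∨ q (s + 1) ≤ q s / 2) :
    q t ≤ 100 * ((c : ℝ) * d) ^ 2 * Real.log n :=
  deterministic_queue_stabilization_general n c d hcd t ht q hstart hstep hhalf
end

section
/- Union-bound counting estimate for small sets: for every integer c ≥ 1 there exists d₀ such that for all integers d ≥ d₀, setting β = 100·(cd)², for all sufficiently large n one has Σ_{s=⌈2β·log n⌉}^{⌊n/2000⌋} C(n,s) · C(n−s,⌈s/10⌉) · C(ds,⌈β·log n⌉) · (242·s/(n−1))^{ds−⌈β·log n⌉} ≤ n^{−2}, where C(a,b) denotes the binomial coefficient and log is the natural logarithm. -/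
private lemma aux_pow_div_factorial_le_exp {x : ℝ} (hx : 0 ≤ x) (k : ℕ) :
    x ^ k / k.factorial ≤ Real.exp x := by
  calc x ^ k / k.factorial
      ≤ ∑ i ∈ Finset.range (k + 1), x ^ i / i.factorial := by
        exact Finset.single_le_sum (f := fun i => x ^ i / i.factorial)
          (fun i _ => by positivity) (Finset.self_mem_range_succ k)
    _ ≤ Real.exp x := Real.sum_le_exp_of_nonneg hx _

private lemma aux_pow_self_div_factorial (k : ℕ) :
    (k : ℝ) ^ k / k.factorial ≤ 3 ^ k := by
  calc (k : ℝ) ^ k / k.factorial ≤ Real.exp k :=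
        aux_pow_div_factorial_le_exp (Nat.cast_nonneg k) k
    _ = Real.exp 1 ^ k := by rw [← Real.exp_nat_mul, mul_one]
    _ ≤ 3 ^ k := by
        refine pow_le_pow_left₀ (Real.exp_pos 1).le ?_ k
        have := Real.exp_one_lt_d9
        linarith

private lemma aux_choose_le_two_pow (n k : ℕ) : n.choose k ≤ 2 ^ n := by
  rcases le_or_gt k n with h | h
  · rw [← Nat.sum_range_choose n]
    exact Finset.single_le_sum (f := fun i => n.choose i) (fun i _ => Nat.zero_le _)
      (Finset.mem_range.2 (Nat.lt_succ_of_le h))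
  · rw [Nat.choose_eq_zero_of_lt h]; exact Nat.zero_le _

set_option maxHeartbeats 1000000 in
/-- Union-bound counting estimate for small sets: for every integer
`c ≥ 1` there exists `d₀` such that for all integers `d ≥ d₀`, setting
`β = 100·(cd)²`, for all sufficiently large `n` one has
`Σ_{s=⌈2β·log n⌉}^{⌊n/2000⌋} C(n,s)·C(n−s,⌈s/10⌉)·C(ds,⌈β·log n⌉)·
  (242·s/(n−1))^{ds−⌈β·log n⌉} ≤ n^{−2}`. -/
theorem small_sets_counting :
    ∀ c : ℕ, 1 ≤ c → ∃ d₀ : ℕ, ∀ d : ℕ, d₀ ≤ d → ∃ n₀ : ℕ, ∀ n : ℕ, n₀ ≤ n →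
    ∑ s ∈ Finset.Icc ⌈2 * (100 * ((c : ℝ) * d) ^ 2) * Real.log n⌉₊ (n / 2000),
      (n.choose s : ℝ) * (((n - s).choose ⌈(s : ℝ) / 10⌉₊ : ℕ) : ℝ) *
        (((d * s).choose ⌈(100 * ((c : ℝ) * d) ^ 2) * Real.log n⌉₊ : ℕ) : ℝ) *
        (242 * (s : ℝ) / ((n : ℝ) - 1)) ^
          (d * s - ⌈(100 * ((c : ℝ) * d) ^ 2) * Real.log n⌉₊)
      ≤ ((n : ℝ) ^ 2)⁻¹ := by
  intro c hc
  refine ⟨35, fun d hd => ⟨2, fun n hn => ?_⟩⟩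
  set β : ℝ := 100 * ((c : ℝ) * d) ^ 2 with hβdef
  set m : ℕ := ⌈β * Real.log n⌉₊ with hmdef
  set L : ℕ := ⌈2 * β * Real.log n⌉₊ with hLdef
  have hn2 : (2 : ℝ) ≤ n := by exact_mod_cast hn
  have hn0 : (0 : ℝ) < n := by linarith
  have hlogn : 0 ≤ Real.log n := Real.log_nonneg (by linarith)
  have hc1 : (1 : ℝ) ≤ c := by exact_mod_cast hc
  have hd1 : (1 : ℝ) ≤ d := by exact_mod_cast le_trans (by norm_num) hd
  have hcd : (1 : ℝ) ≤ (c : ℝ) * d := by nlinarith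
  have hβ3 : (3 : ℝ) ≤ β := by rw [hβdef]; nlinarith
  have hLlow : 2 * β * Real.log n ≤ (L : ℝ) := Nat.le_ceil _
  -- termwise bound
  have key : ∀ s ∈ Finset.Icc L (n / 2000),
      (n.choose s : ℝ) * (((n - s).choose ⌈(s : ℝ) / 10⌉₊ : ℕ) : ℝ) *
        (((d * s).choose m : ℕ) : ℝ) *
        (242 * (s : ℝ) / ((n : ℝ) - 1)) ^ (d * s - m) ≤ ((1 : ℝ) / 2) ^ L := by
    intro s hs
    obtain ⟨hsL, hsM⟩ := Finset.mem_Icc.mp hs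
    set t : ℕ := ⌈(s : ℝ) / 10⌉₊ with htdef
    have hts : t ≤ s := Nat.ceil_le.mpr (div_le_self (Nat.cast_nonneg s) (by norm_num))
    have hst10 : (s : ℝ) ≤ 10 * t := by
      have := Nat.le_ceil ((s : ℝ) / 10); rw [← htdef] at this; linarith
    have hms : m ≤ s := by
      refine le_trans ?_ hsL
      exact Nat.ceil_le_ceil (by nlinarith)
    have hsn : (s : ℝ) * 2000 ≤ n := by
      have h := (Nat.le_div_iff_mul_le (by norm_num : 0 < 2000)).mp hsM
      exact_mod_cast h
    set q : ℝ := 242 * (s : ℝ) / ((n : ℝ) - 1) with hqdef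
    have hq0 : 0 ≤ q := div_nonneg (by positivity) (by linarith)
    have hq484 : q ≤ 484 * s / n := by
      rw [hqdef, div_le_div_iff₀ (by linarith) hn0]
      nlinarith [(Nat.cast_nonneg s : (0:ℝ) ≤ s)]
    have hq14 : q ≤ 1 / 4 := by
      refine le_trans hq484 ?_
      rw [div_le_div_iff₀ hn0 (by norm_num)]
      nlinarith [(Nat.cast_nonneg s : (0:ℝ) ≤ s)]
    set A : ℕ := d * s with hAdef
    have h35 : 35 * s ≤ A := by rw [hAdef]; exact Nat.mul_le_mul_right s hd
    set r : ℕ := A - m - s - t with hrdef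
    have hsplit : A - m = s + (t + r) := by omega
    have hsfact : (0 : ℝ) < (Nat.factorial s : ℝ) := by
      exact_mod_cast Nat.factorial_pos s
    have htfact : (0 : ℝ) < (Nat.factorial t : ℝ) := by
      exact_mod_cast Nat.factorial_pos t
    -- first factor
    have h1 : (n.choose s : ℝ) * q ^ s ≤ 1452 ^ s := by
      calc (n.choose s : ℝ) * q ^ s
          ≤ ((n : ℝ) ^ s / Nat.factorial s) * (484 * s / n) ^ s := by
            refine mul_le_mul (Nat.choose_le_pow_div s n)
              (pow_le_pow_left₀ hq0 hq484 s) (by positivity) (by positivity)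
        _ = 484 ^ s * ((s : ℝ) ^ s / Nat.factorial s) := by
            rw [div_pow, mul_pow]
            field_simp
        _ ≤ 484 ^ s * 3 ^ s := by
            refine mul_le_mul_of_nonneg_left (aux_pow_self_div_factorial s) (by positivity)
        _ = 1452 ^ s := by rw [← mul_pow]; norm_num
    -- second factor
    have h2 : (((n - s).choose t : ℕ) : ℝ) * q ^ t ≤ 14520 ^ s := by
      have hcast : ((n - s : ℕ) : ℝ) ≤ n := by exact_mod_cast Nat.sub_le n s
      calc (((n - s).choose t : ℕ) : ℝ) * q ^ t
          ≤ ((n : ℝ) ^ t / Nat.factorial t) * (484 * s / n) ^ t := by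
            refine mul_le_mul ?_ (pow_le_pow_left₀ hq0 hq484 t) (by positivity) (by positivity)
            refine le_trans (Nat.choose_le_pow_div t (n - s)) ?_
            exact div_le_div_of_nonneg_right (pow_le_pow_left₀ (by positivity) hcast t) htfact.le
        _ = 484 ^ t * ((s : ℝ) ^ t / Nat.factorial t) := by
            rw [div_pow, mul_pow]
            field_simp
        _ ≤ 484 ^ t * ((10 * (t : ℝ)) ^ t / Nat.factorial t) := by
            refine mul_le_mul_of_nonneg_left ?_ (by positivity)
            exact div_le_div_of_nonneg_right (pow_le_pow_left₀ (Nat.cast_nonneg s) hst10 t) htfact.le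
        _ = 484 ^ t * (10 ^ t * ((t : ℝ) ^ t / Nat.factorial t)) := by
            rw [mul_pow]; ring
        _ ≤ 484 ^ t * (10 ^ t * 3 ^ t) := by
            refine mul_le_mul_of_nonneg_left ?_ (by positivity)
            exact mul_le_mul_of_nonneg_left (aux_pow_self_div_factorial t) (by positivity)
        _ = 14520 ^ t := by rw [← mul_pow, ← mul_pow]; norm_num
        _ ≤ 14520 ^ s := pow_le_pow_right₀ (by norm_num) hts
    -- third factor
    have h3 : ((A.choose m : ℕ) : ℝ) * q ^ r ≤ (1 / 2 : ℝ) ^ (29 * s) := by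
      have hch : ((A.choose m : ℕ) : ℝ) ≤ 2 ^ A := by
        exact_mod_cast aux_choose_le_two_pow A m
      have hqr : q ^ r ≤ (1 / 4 : ℝ) ^ r := pow_le_pow_left₀ hq0 hq14 r
      calc ((A.choose m : ℕ) : ℝ) * q ^ r
          ≤ (2 : ℝ) ^ A * (1 / 4) ^ r :=
            mul_le_mul hch hqr (by positivity) (by positivity)
        _ = (2 : ℝ) ^ A * (1 / 2) ^ (2 * r) := by
            have h4 : ((1:ℝ)/4) = (1/2)^2 := by norm_num
            rw [h4, ← pow_mul]
        _ = (1 / 2 : ℝ) ^ (2 * r - A) := by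
            have hA2r : A ≤ 2 * r := by omega
            have : 2 * r = A + (2 * r - A) := by omega
            rw [this, pow_add, ← mul_assoc, ← mul_pow]
            norm_num
        _ ≤ (1 / 2 : ℝ) ^ (29 * s) := by
            refine pow_le_pow_of_le_one (by norm_num) (by norm_num) (by omega)
    calc (n.choose s : ℝ) * (((n - s).choose t : ℕ) : ℝ) * ((A.choose m : ℕ) : ℝ) *
          q ^ (A - m)
        = ((n.choose s : ℝ) * q ^ s) * ((((n - s).choose t : ℕ) : ℝ) * q ^ t) *
            (((A.choose m : ℕ) : ℝ) * q ^ r) := by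
          rw [hsplit, pow_add, pow_add]; ring
      _ ≤ 1452 ^ s * 14520 ^ s * ((1 / 2 : ℝ) ^ (29 * s)) := by
          refine mul_le_mul (mul_le_mul h1 h2 (by positivity) (by positivity)) h3
            (by positivity) (by positivity)
      _ = ((1452 * 14520 * (1 / 2 : ℝ) ^ 29) : ℝ) ^ s := by
          rw [pow_mul, ← mul_pow, ← mul_pow]
      _ ≤ ((1 / 2 : ℝ)) ^ s := by
          refine pow_le_pow_left₀ (by positivity) (by norm_num) s
      _ ≤ ((1 / 2 : ℝ)) ^ L := pow_le_pow_of_le_one (by norm_num) (by norm_num) hsL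
  -- geometric tail via cardinality
  have hcard : ((Finset.Icc L (n / 2000)).card : ℝ) ≤ n := by
    have h1 : (Finset.Icc L (n / 2000)).card = n / 2000 + 1 - L := Nat.card_Icc L (n / 2000)
    have h2 : n / 2000 < n := Nat.div_lt_self (by omega) (by norm_num)
    have : (Finset.Icc L (n / 2000)).card ≤ n := by omega
    exact_mod_cast this
  have hhalf : ((1 : ℝ) / 2) ^ L ≤ ((n : ℝ) ^ 3)⁻¹ := by
    have hlog2 : (1 : ℝ) / 2 ≤ Real.log 2 := by
      have := Real.log_two_gt_d9; linarith
    have hexp : (3 : ℝ) * Real.log n ≤ (L : ℝ) * Real.log 2 := by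
      have e1 : 2 * β * Real.log n * (1 / 2) ≤ (L : ℝ) * Real.log 2 :=
        mul_le_mul hLlow hlog2 (by norm_num) (Nat.cast_nonneg L)
      have e2 : 3 * Real.log n ≤ β * Real.log n :=
        mul_le_mul_of_nonneg_right hβ3 hlogn
      rw [show 2 * β * Real.log n * (1 / 2) = β * Real.log n from by ring] at e1
      linarith
    have hcube : (n : ℝ) ^ 3 ≤ 2 ^ L := by
      calc (n : ℝ) ^ 3 = Real.exp (Real.log n) ^ 3 := by rw [Real.exp_log hn0]
        _ = Real.exp ((3 : ℕ) * Real.log n) := by rw [Real.exp_nat_mul]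
        _ ≤ Real.exp ((L : ℝ) * Real.log 2) := by
            refine Real.exp_le_exp.mpr ?_
            push_cast
            exact hexp
        _ = Real.exp (Real.log 2) ^ L := Real.exp_nat_mul _ L
        _ = 2 ^ L := by rw [Real.exp_log (by norm_num : (0:ℝ) < 2)]
    calc ((1 : ℝ) / 2) ^ L = ((2 : ℝ) ^ L)⁻¹ := by rw [one_div, inv_pow]
      _ ≤ ((n : ℝ) ^ 3)⁻¹ := by
          exact inv_anti₀ (by positivity) hcube
  calc ∑ s ∈ Finset.Icc L (n / 2000),
        (n.choose s : ℝ) * (((n - s).choose ⌈(s : ℝ) / 10⌉₊ : ℕ) : ℝ) *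
          (((d * s).choose m : ℕ) : ℝ) *
          (242 * (s : ℝ) / ((n : ℝ) - 1)) ^ (d * s - m)
      ≤ (Finset.Icc L (n / 2000)).card • ((1 : ℝ) / 2) ^ L :=
        Finset.sum_le_card_nsmul _ _ _ key
    _ = ((Finset.Icc L (n / 2000)).card : ℝ) * ((1 : ℝ) / 2) ^ L := nsmul_eq_mul _ _
    _ ≤ (n : ℝ) * ((1 : ℝ) / 2) ^ L :=
        mul_le_mul_of_nonneg_right hcard (by positivity)
    _ ≤ (n : ℝ) * ((n : ℝ) ^ 3)⁻¹ :=
        mul_le_mul_of_nonneg_left hhalf (le_of_lt hn0)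
    _ = ((n : ℝ) ^ 2)⁻¹ := by
        field_simp
end
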